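/- Interior case of the structural theorem: Fix α ∈ (0,1) and an admissible chamber Γ with quantile count vector k := k_{α,Γ}, and let W^{(k)} ∈ W̄ be the shadow-Kelly point W^{(k)}_i = k_i/(n q_i). If W^{(k)} ∈ cl(F_Γ), then W^{(k)} maximizes W ↦ W^{k} over cl(F_Γ); consequently Q_{n,α}(W) ≤ Q_{n,α}(W^{(k)}) = (W^{(k)})^{k} for every W ∈ cl(F_Γ). -/

import Mathlib

/-!
Inside a chamber the monomials `W ↦ W^l`, `l ∈ C_n`, are totally ordered independently of `W`,
since `log W^l - log W^k` is a linear form in `log W` that cannot vanish on the connected set `Γ`.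
By continuity this order survives weakly on `cl(F_Γ)`, so the count vector `k` realising the
quantile on `F_Γ` realises it on all of `cl(F_Γ)`: there `Q_{n,α}(W) = W^k`. Finally, weighted
AM–GM with weights `k_i / n` shows that `W^k` is maximised on the whole budget simplex at the
shadow-Kelly point.
-/

open Finset Filter Topology
open scoped Classical

noncomputable section

/-- The closed Arrow–Debreu wealth simplex `{W ∈ [0,∞)^m : Σ q_i W_i = 1}`. -/
def closedSimplex {m : ℕ} (q : Fin m → ℝ) : Set (Fin m → ℝ) :=
  {W | (∀ i, 0 ≤ W i) ∧ ∑ i, q i * W i = 1}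

/-- The open Arrow–Debreu wealth simplex `{W ∈ (0,∞)^m : Σ q_i W_i = 1}`. -/
def openSimplex {m : ℕ} (q : Fin m → ℝ) : Set (Fin m → ℝ) :=
  {W | (∀ i, 0 < W i) ∧ ∑ i, q i * W i = 1}

/-- The finite set `C_n` of count vectors `k : Fin m → ℕ` with `Σ k_i = n`. -/
def countFinset (m n : ℕ) : Finset (Fin m → ℕ) :=
  (Fintype.piFinset fun _ : Fin m => Finset.range (n + 1)).filter fun k => ∑ i, k i = n

/-- The monomial `W^k := Π_i W_i^{k_i}` (with the convention `0^0 = 1`). -/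
def mono {m : ℕ} (W : Fin m → ℝ) (k : Fin m → ℕ) : ℝ := ∏ i, W i ^ k i

/-- The multinomial probability `π_k = (n!/(k_1!⋯k_m!))·Π p_i^{k_i}`. -/
def countProb {m : ℕ} (p : Fin m → ℝ) (k : Fin m → ℕ) : ℝ :=
  (Nat.multinomial Finset.univ k : ℝ) * ∏ i, p i ^ k i

/-- The upper α-quantile of terminal wealth
`Q_{n,α}(W) := sup{t ∈ [0,∞) : Σ_{k ∈ C_n : W^k ≥ t} π_k ≥ α}`. -/
def upperQuantile {m : ℕ} (p : Fin m → ℝ) (n : ℕ) (α : ℝ) (W : Fin m → ℝ) : ℝ :=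
  sSup {t : ℝ | 0 ≤ t ∧
    α ≤ ∑ k ∈ countFinset m n, if t ≤ mono W k then countProb p k else 0}

/-- The union of the count hyperplanes `H_{k,ℓ}`. -/
def hyperUnion (m n : ℕ) : Set (Fin m → ℝ) :=
  {u | ∃ k ∈ countFinset m n, ∃ l ∈ countFinset m n,
    k ≠ l ∧ ∑ i, ((k i : ℝ) - (l i : ℝ)) * u i = 0}

/-- A chamber is a connected component of the complement of the count arrangement. -/
def IsChamber (m n : ℕ) (Γ : Set (Fin m → ℝ)) : Prop :=
  ∃ u ∈ (hyperUnion m n)ᶜ, Γ = connectedComponentIn (hyperUnion m n)ᶜ u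

/-- `F_Γ := {W ∈ W⁺⁺ : log W ∈ Γ}`. -/
def chamberFace {m : ℕ} (q : Fin m → ℝ) (Γ : Set (Fin m → ℝ)) : Set (Fin m → ℝ) :=
  {W | W ∈ openSimplex q ∧ (fun i => Real.log (W i)) ∈ Γ}

/-- `k` is the quantile count vector `k_{α,Γ}` of the chamber `Γ`: the tail mass at `W^k`
is at least `α`, while the strict tail mass is below `α`, for every `W ∈ F_Γ`. -/
def IsQuantileVec {m : ℕ} (p q : Fin m → ℝ) (n : ℕ) (α : ℝ) (Γ : Set (Fin m → ℝ))
    (k : Fin m → ℕ) : Prop :=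
  k ∈ countFinset m n ∧
  ∀ W ∈ chamberFace q Γ,
    α ≤ (∑ l ∈ countFinset m n, if mono W k ≤ mono W l then countProb p l else 0) ∧
    (∑ l ∈ countFinset m n, if mono W k < mono W l then countProb p l else 0) < α

lemma prod_pow_le_one_of_sum_mul_le {ι : Type*} (s : Finset ι) {z : ι → ℝ}
    (hz : ∀ i ∈ s, 0 ≤ z i) {k : ι → ℕ} (hk : 0 < ∑ i ∈ s, k i)
    (h : ∑ i ∈ s, (k i : ℝ) * z i ≤ ∑ i ∈ s, (k i : ℝ)) : ∏ i ∈ s, z i ^ k i ≤ 1 := by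
  have hk' : (0 : ℝ) < ∑ i ∈ s, (k i : ℝ) := by exact_mod_cast hk
  have hamgm := Real.geom_mean_le_arith_mean s (fun i => (k i : ℝ)) z (fun i _ => by positivity)
    hk' hz
  simp only [Real.rpow_natCast] at hamgm
  by_contra! hgt
  exact (hamgm.trans ((div_le_one hk').mpr h)).not_gt (Real.one_lt_rpow hgt (inv_pos.mpr hk'))

lemma IsPreconnected.pos_of_pos {X : Type*} [TopologicalSpace X] {S : Set X}
    (hS : IsPreconnected S) {f : X → ℝ} (hf : ContinuousOn f S) (hne : ∀ x ∈ S, f x ≠ 0)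
    {u v : X} (hu : u ∈ S) (hv : v ∈ S) (h : 0 < f u) : 0 < f v := by
  by_contra! hfv
  obtain ⟨x, hx, hx0⟩ := hS.intermediate_value hv hu hf ⟨hfv, h.le⟩
  exact hne x hx hx0

lemma sum_le_sum_ite_of_imp {ι : Type*} {s : Finset ι} {P Q : ι → Prop} [DecidablePred P]
    [DecidablePred Q] {f : ι → ℝ} (hf : ∀ i ∈ s, 0 ≤ f i) (h : ∀ i ∈ s, P i → Q i) :
    ∑ i ∈ s, (if P i then f i else 0) ≤ ∑ i ∈ s, if Q i then f i else 0 :=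
  sum_le_sum fun i hi => by
    split_ifs with hP hQ
    exacts [le_rfl, absurd (h i hi hP) hQ, hf i hi, le_rfl]

def shadowKelly {m : ℕ} (q : Fin m → ℝ) (n : ℕ) (k : Fin m → ℕ) : Fin m → ℝ :=
  fun i => (k i : ℝ) / (n * q i)

section Monomial

variable {m : ℕ}

lemma sum_eq_of_mem_countFinset {n : ℕ} {k : Fin m → ℕ} (hk : k ∈ countFinset m n) :
    ∑ i, k i = n :=
  (mem_filter.mp hk).2

lemma mono_nonneg {W : Fin m → ℝ} (hW : ∀ i, 0 ≤ W i) (k : Fin m → ℕ) : 0 ≤ mono W k :=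
  prod_nonneg fun i _ => pow_nonneg (hW i) _

lemma mono_pos {W : Fin m → ℝ} (hW : ∀ i, 0 < W i) (k : Fin m → ℕ) : 0 < mono W k :=
  prod_pos fun i _ => pow_pos (hW i) _

lemma continuous_mono (k : Fin m → ℕ) : Continuous fun W : Fin m → ℝ => mono W k :=
  continuous_finsetProd _ fun i _ => (continuous_apply i).pow _

lemma countProb_nonneg {p : Fin m → ℝ} (hp : ∀ i, 0 ≤ p i) (k : Fin m → ℕ) :
    0 ≤ countProb p k :=
  mul_nonneg (Nat.cast_nonneg _) (prod_nonneg fun i _ => pow_nonneg (hp i) _)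

lemma log_mono_sub_log_mono {W : Fin m → ℝ} (hW : ∀ i, 0 < W i) (k l : Fin m → ℕ) :
    Real.log (mono W l) - Real.log (mono W k) = ∑ i, ((l i : ℝ) - k i) * Real.log (W i) := by
  simp only [mono, Real.log_prod fun i _ => (pow_pos (hW i) _).ne', Real.log_pow, sub_mul,
    sum_sub_distrib]

lemma mono_lt_mono_iff {W : Fin m → ℝ} (hW : ∀ i, 0 < W i) (k l : Fin m → ℕ) :
    mono W k < mono W l ↔ 0 < ∑ i, ((l i : ℝ) - k i) * Real.log (W i) := by
  rw [← Real.log_lt_log_iff (mono_pos hW k) (mono_pos hW l), ← sub_pos,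
    log_mono_sub_log_mono hW]

lemma mono_le_mono_shadowKelly {n : ℕ} (hn : 0 < n) {q : Fin m → ℝ} (hq : ∀ i, 0 < q i)
    {k : Fin m → ℕ} (hk : ∑ i, k i = n) {W : Fin m → ℝ} (hW : W ∈ closedSimplex q) :
    mono W k ≤ mono (shadowKelly q n k) k := by
  -- `z i = W i / shadowKelly q n k i`, and AM–GM with weights `k i` bounds `∏ z i ^ k i`.
  set z : Fin m → ℝ := fun i => n * q i * W i / k i
  have hz : ∀ i ∈ univ, 0 ≤ z i := fun i _ => by have := hq i; have := hW.1 i; positivity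
  have hmean : ∑ i, (k i : ℝ) * z i ≤ ∑ i, (k i : ℝ) := by
    rw [← Nat.cast_sum, hk, ← mul_one (n : ℝ), ← hW.2, mul_sum]
    refine sum_le_sum fun i _ => ?_
    rcases eq_or_ne (k i) 0 with hki | hki
    · simp only [hki, Nat.cast_zero, zero_mul]
      have := hq i; have := hW.1 i; positivity
    · have : (k i : ℝ) ≠ 0 := Nat.cast_ne_zero.mpr hki
      exact le_of_eq (by simp only [z]; field_simp)
  have hsplit : mono W k = (∏ i, z i ^ k i) * mono (shadowKelly q n k) k := by
    rw [mono, mono, ← prod_mul_distrib]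
    refine prod_congr rfl fun i _ => ?_
    rcases eq_or_ne (k i) 0 with hki | hki
    · simp [hki]
    · have : (k i : ℝ) ≠ 0 := Nat.cast_ne_zero.mpr hki
      rw [← mul_pow]
      congr 1
      simp only [z, shadowKelly]
      field_simp [(hq i).ne']
  rw [hsplit]
  exact mul_le_of_le_one_left
    (mono_nonneg (fun i => div_nonneg (Nat.cast_nonneg _) (by have := hq i; positivity)) k)
    (prod_pow_le_one_of_sum_mul_le univ hz (hk ▸ hn) hmean)

end Monomial

section Chamber

variable {m n : ℕ} {q : Fin m → ℝ} {Γ : Set (Fin m → ℝ)} {k l : Fin m → ℕ}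

lemma IsChamber.isPreconnected (hΓ : IsChamber m n Γ) : IsPreconnected Γ := by
  obtain ⟨u, -, rfl⟩ := hΓ
  exact isPreconnected_connectedComponentIn

lemma IsChamber.sum_sub_mul_ne_zero (hΓ : IsChamber m n Γ) (hk : k ∈ countFinset m n)
    (hl : l ∈ countFinset m n) (hkl : k ≠ l) {u : Fin m → ℝ} (hu : u ∈ Γ) :
    ∑ i, ((l i : ℝ) - k i) * u i ≠ 0 := by
  obtain ⟨u₀, -, rfl⟩ := hΓ
  exact fun h => connectedComponentIn_subset _ _ hu ⟨l, hl, k, hk, hkl.symm, h⟩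

lemma mono_ne_mono_of_mem_chamberFace (hΓ : IsChamber m n Γ) (hk : k ∈ countFinset m n)
    (hl : l ∈ countFinset m n) (hkl : k ≠ l) {W : Fin m → ℝ} (hW : W ∈ chamberFace q Γ) :
    mono W k ≠ mono W l := by
  intro h
  apply hΓ.sum_sub_mul_ne_zero hk hl hkl hW.2
  rw [← log_mono_sub_log_mono hW.1.1, h, sub_self]

lemma mono_lt_mono_of_mem_chamberFace (hΓ : IsChamber m n Γ) (hk : k ∈ countFinset m n)
    (hl : l ∈ countFinset m n) {W₀ W : Fin m → ℝ} (hW₀ : W₀ ∈ chamberFace q Γ)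
    (hW : W ∈ chamberFace q Γ) (h : mono W₀ k < mono W₀ l) : mono W k < mono W l := by
  have hkl : k ≠ l := by
    rintro rfl
    exact h.false
  rw [mono_lt_mono_iff hW₀.1.1] at h
  rw [mono_lt_mono_iff hW.1.1]
  have hcont : Continuous fun u : Fin m → ℝ => ∑ i, ((l i : ℝ) - k i) * u i := by fun_prop
  exact hΓ.isPreconnected.pos_of_pos hcont.continuousOn
    (fun u hu => hΓ.sum_sub_mul_ne_zero hk hl hkl hu) hW₀.2 hW.2 h

lemma mono_le_mono_of_mem_closure (hΓ : IsChamber m n Γ) (hk : k ∈ countFinset m n)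
    (hl : l ∈ countFinset m n) {W₀ W : Fin m → ℝ} (hW₀ : W₀ ∈ chamberFace q Γ)
    (h : mono W₀ k ≤ mono W₀ l) (hW : W ∈ closure (chamberFace q Γ)) :
    mono W k ≤ mono W l := by
  rcases eq_or_ne k l with rfl | hkl
  · exact le_rfl
  have hlt := h.lt_of_ne (mono_ne_mono_of_mem_chamberFace hΓ hk hl hkl hW₀)
  exact closure_minimal
    (fun W' hW' => (mono_lt_mono_of_mem_chamberFace hΓ hk hl hW₀ hW' hlt).le)
    (isClosed_le (continuous_mono k) (continuous_mono l)) hW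

lemma isClosed_closedSimplex (q : Fin m → ℝ) : IsClosed (closedSimplex q) := by
  simp only [closedSimplex, Set.ofPred_and, Set.ofPred_forall]
  exact (isClosed_iInter fun i => isClosed_le continuous_const (continuous_apply i)).inter
    (isClosed_eq (by fun_prop) continuous_const)

lemma closure_chamberFace_subset (q : Fin m → ℝ) (Γ : Set (Fin m → ℝ)) :
    closure (chamberFace q Γ) ⊆ closedSimplex q :=
  closure_minimal (fun _ hW => ⟨fun i => (hW.1.1 i).le, hW.1.2⟩) (isClosed_closedSimplex q)

end Chamber

section Quantile

variable {m n : ℕ} {p q : Fin m → ℝ} {α : ℝ}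

lemma upperQuantile_eq_of_forall_lt {W : Fin m → ℝ} {T : ℝ} (hT : 0 ≤ T)
    (hmass : α ≤ ∑ l ∈ countFinset m n, if T ≤ mono W l then countProb p l else 0)
    (hlt : ∀ t, T < t → ∑ l ∈ countFinset m n, (if t ≤ mono W l then countProb p l else 0) < α) :
    upperQuantile p n α W = T :=
  IsGreatest.csSup_eq ⟨⟨hT, hmass⟩, fun t ht => not_lt.mp fun hTt => (hlt t hTt).not_ge ht.2⟩

lemma upperQuantile_eq_mono_of_mem_closure (hp : ∀ i, 0 ≤ p i) {Γ : Set (Fin m → ℝ)}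
    (hΓ : IsChamber m n Γ) {k : Fin m → ℕ} (hk : IsQuantileVec p q n α Γ k)
    {W₀ W : Fin m → ℝ} (hW₀ : W₀ ∈ chamberFace q Γ) (hW : W ∈ closure (chamberFace q Γ)) :
    upperQuantile p n α W = mono W k := by
  obtain ⟨hkC, hquant⟩ := hk
  obtain ⟨hmass, hstrict⟩ := hquant W₀ hW₀
  have hπ : ∀ l ∈ countFinset m n, 0 ≤ countProb p l := fun l _ => countProb_nonneg hp l
  refine upperQuantile_eq_of_forall_lt (mono_nonneg (closure_chamberFace_subset q Γ hW).1 k)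
    (hmass.trans (sum_le_sum_ite_of_imp hπ fun l hl h =>
      mono_le_mono_of_mem_closure hΓ hkC hl hW₀ h hW)) fun t ht => ?_
  refine (sum_le_sum_ite_of_imp hπ fun l hl htl => ?_).trans_lt hstrict
  by_contra! hle
  exact (ht.trans_le htl).not_ge (mono_le_mono_of_mem_closure hΓ hl hkC hW₀ hle hW)

end Quantile

theorem interior_case_general (m n : ℕ) (hn : 1 ≤ n)
    (p q : Fin m → ℝ) (hp : ∀ i, 0 < p i ∧ p i < 1)
    (hq : ∀ i, 0 < q i) (α : ℝ)
    (Γ : Set (Fin m → ℝ)) (hΓ : IsChamber m n Γ)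
    (hadm : (chamberFace q Γ).Nonempty)
    (k : Fin m → ℕ) (hk : IsQuantileVec p q n α Γ k)
    (hWk : (fun i => (k i : ℝ) / (n * q i)) ∈ closure (chamberFace q Γ)) :
    (∀ W ∈ closure (chamberFace q Γ),
      mono W k ≤ mono (fun i => (k i : ℝ) / (n * q i)) k) ∧
    upperQuantile p n α (fun i => (k i : ℝ) / (n * q i)) =
      mono (fun i => (k i : ℝ) / (n * q i)) k ∧
    ∀ W ∈ closure (chamberFace q Γ),
      upperQuantile p n α W ≤ upperQuantile p n α (fun i => (k i : ℝ) / (n * q i)) := by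
  obtain ⟨W₀, hW₀⟩ := hadm
  have hmax : ∀ W ∈ closure (chamberFace q Γ), mono W k ≤ mono (shadowKelly q n k) k :=
    fun W hW => mono_le_mono_shadowKelly hn hq (sum_eq_of_mem_countFinset hk.1)
      (closure_chamberFace_subset q Γ hW)
  have hquant : ∀ W ∈ closure (chamberFace q Γ), upperQuantile p n α W = mono W k :=
    fun W hW => upperQuantile_eq_mono_of_mem_closure (fun i => (hp i).1.le) hΓ hk hW₀ hW
  refine ⟨hmax, hquant _ hWk, fun W hW => ?_⟩
  rw [hquant W hW, hquant _ hWk]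
  exact hmax W hW

/-- **Interior case of the structural theorem.** If the shadow-Kelly point of the
quantile count vector `k = k_{α,Γ}` lies in the closure of `F_Γ`, then it maximizes
`W ↦ W^k` there, and consequently it maximizes the upper `α`-quantile on `cl(F_Γ)`,
its quantile being `(W^{(k)})^k`. -/
theorem interior_case (m n : ℕ) (hm : 2 ≤ m) (hn : 1 ≤ n)
    (p q : Fin m → ℝ) (hp : ∀ i, 0 < p i ∧ p i < 1) (hpsum : ∑ i, p i = 1)
    (hq : ∀ i, 0 < q i) (α : ℝ) (hα : 0 < α ∧ α < 1)
    (Γ : Set (Fin m → ℝ)) (hΓ : IsChamber m n Γ)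
    (hadm : (chamberFace q Γ).Nonempty)
    (k : Fin m → ℕ) (hk : IsQuantileVec p q n α Γ k)
    (hWk : (fun i => (k i : ℝ) / (n * q i)) ∈ closure (chamberFace q Γ)) :
    (∀ W ∈ closure (chamberFace q Γ),
      mono W k ≤ mono (fun i => (k i : ℝ) / (n * q i)) k) ∧
    upperQuantile p n α (fun i => (k i : ℝ) / (n * q i)) =
      mono (fun i => (k i : ℝ) / (n * q i)) k ∧
    ∀ W ∈ closure (chamberFace q Γ),
      upperQuantile p n α W ≤ upperQuantile p n α (fun i => (k i : ℝ) / (n * q i)) :=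
  interior_case_general m n hn p q hp hq α Γ hΓ hadm k hk hWk
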